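/- The unique positive real number m̂ satisfying 2Φ(−m̂) = m̂·φ(m̂) lies in the interval (1.18, 1.20), and 0.2335 < 2Φ(−m̂) < 0.2345 (i.e., 2Φ(−m̂) equals 0.234 to three decimal places). -/

import Mathlib

/-!
The function `mhatGap y = 2Φ(-y) - yφ(y)` has derivative `(y² - 3)φ(y)`, so it is
strictly decreasing on `[0, √3]`, and Mills' ratio bound `Φ(-y) ≤ φ(y)/y` shows that any
positive zero `m` satisfies `m² ≤ 2`. The sign changes `mhatGap 1.183 > 0 > mhatGap 1.193`
therefore pin `m` down; they follow from Taylor bounds for `exp` and for `∫₀^a e^{-t²/2} dt`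
together with `3.141592 < π < 3.141593`. Finally `yφ(y)` is strictly decreasing on `[1, ∞)`,
so `2Φ(-m) = mφ(m)` lies between `1.193 φ(1.193)` and `1.183 φ(1.183)`.
-/

open MeasureTheory

/-- The standard normal cumulative distribution function
`Φ(x) = ∫_{−∞}^x (2π)^{−1/2} e^{−t²/2} dt`. -/
noncomputable def Phi (x : ℝ) : ℝ :=
  ∫ t in Set.Iic x, (Real.sqrt (2 * Real.pi))⁻¹ * Real.exp (-t ^ 2 / 2)

/-- The standard normal density `φ(x) = (2π)^{−1/2} e^{−x²/2}`. -/
noncomputable def phi (x : ℝ) : ℝ :=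
  (Real.sqrt (2 * Real.pi))⁻¹ * Real.exp (-x ^ 2 / 2)

open Set Filter Real intervalIntegral Topology

lemma phi_eq_gaussianPDFReal : phi = ProbabilityTheory.gaussianPDFReal 0 1 := by
  ext x
  simp [phi, ProbabilityTheory.gaussianPDFReal]

lemma phi_pos (x : ℝ) : 0 < phi x := by
  unfold phi
  positivity

lemma phi_neg (x : ℝ) : phi (-x) = phi x := by
  simp [phi]

lemma continuous_phi : Continuous phi := by
  unfold phi
  fun_prop

lemma integrable_phi : Integrable phi :=
  phi_eq_gaussianPDFReal ▸ ProbabilityTheory.integrable_gaussianPDFReal 0 1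

lemma integral_phi : ∫ t, phi t = 1 :=
  phi_eq_gaussianPDFReal ▸ ProbabilityTheory.integral_gaussianPDFReal_eq_one 0 one_ne_zero

lemma hasDerivAt_phi (x : ℝ) : HasDerivAt phi (-x * phi x) x := by
  have hexp : HasDerivAt (fun y : ℝ => -y ^ 2 / 2) (-x) x :=
    (((hasDerivAt_pow 2 x).neg).div_const 2).congr_deriv (by push_cast; ring)
  exact (hexp.exp.const_mul (√(2 * π))⁻¹).congr_deriv (by simp only [phi]; ring)

lemma tendsto_phi_atTop : Tendsto phi atTop (𝓝 0) := by
  have h : Tendsto (fun x : ℝ => -x ^ 2 / 2) atTop atBot := by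
    simp_rw [neg_div]
    exact tendsto_neg_atTop_atBot.comp ((tendsto_pow_atTop two_ne_zero).atTop_div_const two_pos)
  have h' := (tendsto_exp_atBot.comp h).const_mul (√(2 * π))⁻¹
  rw [mul_zero] at h'
  exact h'

lemma Phi_eq_setIntegral_Iic (x : ℝ) : Phi x = ∫ t in Iic x, phi t := rfl

lemma Phi_neg_eq_setIntegral_Ioi (x : ℝ) : Phi (-x) = ∫ t in Ioi x, phi t := by
  have h := integral_comp_neg_Iic (-x) phi
  simp only [phi_neg, neg_neg] at h
  exact h

lemma Phi_zero : Phi 0 = 1 / 2 := by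
  have hsplit := integral_Iic_add_Ioi (b := 0) integrable_phi.integrableOn
    integrable_phi.integrableOn
  rw [integral_phi, ← Phi_eq_setIntegral_Iic, ← Phi_neg_eq_setIntegral_Ioi, neg_zero] at hsplit
  linarith

lemma Phi_sub_Phi (a b : ℝ) : Phi b - Phi a = ∫ t in a..b, phi t :=
  integral_Iic_sub_Iic integrable_phi.integrableOn integrable_phi.integrableOn

lemma Phi_neg_eq (a : ℝ) : Phi (-a) = 1 / 2 - ∫ t in (0 : ℝ)..a, phi t := by
  have h := Phi_sub_Phi (-a) 0
  have hsymm : ∫ t in -a..0, phi t = ∫ t in (0 : ℝ)..a, phi t := by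
    simpa [phi_neg] using (integral_comp_neg (a := 0) (b := a) phi).symm
  rw [Phi_zero, hsymm] at h
  linarith

lemma hasDerivAt_Phi (x : ℝ) : HasDerivAt Phi (phi x) x := by
  have h := integral_hasDerivAt_right (continuous_phi.intervalIntegrable 0 x)
    (continuous_phi.stronglyMeasurableAtFilter _ _) continuous_phi.continuousAt
  have hPhi : Phi = fun y => Phi 0 + ∫ t in (0 : ℝ)..y, phi t := by
    ext y
    rw [← Phi_sub_Phi, add_sub_cancel]
  exact hPhi ▸ h.const_add (Phi 0)

lemma hasDerivAt_neg_phi (x : ℝ) : HasDerivAt (fun t => -phi t) (x * phi x) x :=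
  (hasDerivAt_phi x).neg.congr_deriv (by ring)

lemma integral_Ioi_mul_phi {x : ℝ} (hx : 0 ≤ x) : ∫ t in Ioi x, t * phi t = phi x := by
  have h := integral_Ioi_of_hasDerivAt_of_nonneg (g := fun t => -phi t)
    continuous_phi.neg.continuousWithinAt
    (fun t _ => hasDerivAt_neg_phi t) (fun t ht => mul_nonneg (hx.trans ht.le) (phi_pos t).le)
    (by simpa using tendsto_phi_atTop.neg)
  simpa using h

lemma integrableOn_Ioi_mul_phi {x : ℝ} (hx : 0 ≤ x) :
    IntegrableOn (fun t => t * phi t) (Ioi x) :=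
  integrableOn_Ioi_deriv_of_nonneg (g := fun t => -phi t) continuous_phi.neg.continuousWithinAt
    (fun t _ => hasDerivAt_neg_phi t) (fun t ht => mul_nonneg (hx.trans ht.le) (phi_pos t).le)
    (by simpa using tendsto_phi_atTop.neg)

lemma Phi_neg_le_phi_div {x : ℝ} (hx : 0 < x) : Phi (-x) ≤ phi x / x := by
  have hle : ∫ t in Ioi x, phi t ≤ ∫ t in Ioi x, x⁻¹ * (t * phi t) := by
    refine setIntegral_mono_on integrable_phi.integrableOn
      ((integrableOn_Ioi_mul_phi hx.le).const_mul x⁻¹) measurableSet_Ioi fun t ht => ?_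
    rw [← mul_assoc, ← div_eq_inv_mul]
    exact le_mul_of_one_le_left (phi_pos t).le ((one_le_div hx).2 (le_of_lt ht))
  rwa [MeasureTheory.integral_const_mul, integral_Ioi_mul_phi hx.le, inv_mul_eq_div,
    ← Phi_neg_eq_setIntegral_Ioi] at hle

noncomputable def mhatGap (y : ℝ) : ℝ := 2 * Phi (-y) - y * phi y

lemma hasDerivAt_mhatGap (x : ℝ) : HasDerivAt mhatGap ((x ^ 2 - 3) * phi x) x := by
  have hPhi : HasDerivAt (fun y => Phi (-y)) (-phi x) x :=
    ((hasDerivAt_Phi (-x)).comp x (hasDerivAt_neg x)).congr_deriv (by rw [phi_neg]; ring)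
  exact ((hPhi.const_mul 2).sub ((hasDerivAt_id x).mul (hasDerivAt_phi x))).congr_deriv
    (by simp only [id_eq]; ring)

lemma strictAntiOn_mhatGap : StrictAntiOn mhatGap (Icc 0 √3) := by
  refine strictAntiOn_of_deriv_neg (convex_Icc _ _)
    (fun x _ => (hasDerivAt_mhatGap x).continuousAt.continuousWithinAt) fun x hx => ?_
  rw [interior_Icc] at hx
  rw [(hasDerivAt_mhatGap x).deriv]
  have hx3 : x ^ 2 < 3 := (lt_sqrt hx.1.le).1 hx.2
  exact mul_neg_of_neg_of_pos (by linarith) (phi_pos x)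

lemma sq_le_two_of_mhatGap_eq_zero {m : ℝ} (hm : 0 < m) (h : mhatGap m = 0) : m ^ 2 ≤ 2 := by
  have hmills := Phi_neg_le_phi_div hm
  rw [mhatGap, sub_eq_zero] at h
  have : m * phi m * m ≤ 2 * phi m := by
    calc m * phi m * m = 2 * Phi (-m) * m := by rw [h]
      _ ≤ 2 * (phi m / m) * m := by gcongr
      _ = 2 * phi m := by field_simp
  nlinarith [phi_pos m]

lemma strictAntiOn_mul_phi : StrictAntiOn (fun y => y * phi y) (Ici 1) := by
  have hderiv (x : ℝ) : HasDerivAt (fun y => y * phi y) ((1 - x ^ 2) * phi x) x :=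
    ((hasDerivAt_id x).mul (hasDerivAt_phi x)).congr_deriv (by simp only [id_eq]; ring)
  refine strictAntiOn_of_deriv_neg (convex_Ici _)
    (fun x _ => (hderiv x).continuousAt.continuousWithinAt) fun x hx => ?_
  rw [interior_Ici] at hx
  rw [(hderiv x).deriv]
  exact mul_neg_of_neg_of_pos (by nlinarith [mem_Ioi.1 hx]) (phi_pos x)

lemma mhatGap_eq (y : ℝ) :
    mhatGap y =
      1 - (2 * (∫ t in (0 : ℝ)..y, exp (-t ^ 2 / 2)) + y * exp (-y ^ 2 / 2)) / √(2 * π) := by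
  have hc : √(2 * π) ≠ 0 := by positivity
  simp only [mhatGap, Phi_neg_eq, phi, intervalIntegral.integral_const_mul]
  field_simp
  ring

lemma mul_phi_eq (y : ℝ) : y * phi y = y * exp (-y ^ 2 / 2) / √(2 * π) := by
  rw [phi, div_eq_mul_inv]
  ring

lemma sqrt_two_pi_gt : 2.506627 < √(2 * π) := by
  rw [lt_sqrt (by norm_num)]
  nlinarith [pi_gt_d6]

lemma sqrt_two_pi_lt : √(2 * π) < 2.50663 := by
  rw [sqrt_lt' (by norm_num)]
  nlinarith [pi_lt_d6]

section Taylor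

open Finset Nat

lemma abs_exp_neg_sq_half_sub_sum_le {t : ℝ} (ht : t ^ 2 ≤ 2) {n : ℕ} (hn : 0 < n) :
    |exp (-t ^ 2 / 2) - ∑ k ∈ range n, (-t ^ 2 / 2) ^ k / k !|
      ≤ (t ^ 2 / 2) ^ n * ((n + 1) / (n ! * n)) := by
  have habs : |-t ^ 2 / 2| = t ^ 2 / 2 := by
    rw [neg_div, abs_neg, abs_of_nonneg (by positivity)]
  have h := Real.exp_bound (habs ▸ (by linarith) : |-t ^ 2 / 2| ≤ 1) hn
  rwa [habs, Nat.cast_succ] at h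

lemma integral_sum_neg_sq_half (a : ℝ) (n : ℕ) :
    ∫ t in (0 : ℝ)..a, ∑ k ∈ range n, (-t ^ 2 / 2) ^ k / k !
      = ∑ k ∈ range n, (-1 / 2) ^ k / k ! * (a ^ (2 * k + 1) / (2 * k + 1)) := by
  rw [integral_finsetSum fun k _ => Continuous.intervalIntegrable (by fun_prop) _ _]
  refine sum_congr rfl fun k _ => ?_
  have hterm : (fun t : ℝ => (-t ^ 2 / 2) ^ k / k !)
      = fun t => (-1 / 2 : ℝ) ^ k / k ! * t ^ (2 * k) := by
    ext t
    rw [pow_mul]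
    ring
  rw [hterm, intervalIntegral.integral_const_mul, integral_pow]
  push_cast
  simp

lemma abs_integral_exp_neg_sq_half_sub_sum_le {a : ℝ} (ha : 0 ≤ a) (ha2 : a ^ 2 ≤ 2) {n : ℕ}
    (hn : 0 < n) :
    |(∫ t in (0 : ℝ)..a, exp (-t ^ 2 / 2))
        - ∑ k ∈ range n, (-1 / 2) ^ k / k ! * (a ^ (2 * k + 1) / (2 * k + 1))|
      ≤ (n + 1) / (n ! * n) / 2 ^ n * (a ^ (2 * n + 1) / (2 * n + 1)) := by
  have hcont : Continuous fun t : ℝ => ∑ k ∈ range n, (-t ^ 2 / 2) ^ k / k ! := by fun_prop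
  rw [← integral_sum_neg_sq_half, ← integral_sub
    (Continuous.intervalIntegrable (by fun_prop) _ _) (hcont.intervalIntegrable _ _)]
  calc _ ≤ ∫ t in (0 : ℝ)..a, ((n + 1) / (n ! * n) / 2 ^ n * t ^ (2 * n) : ℝ) := by
        rw [← Real.norm_eq_abs]
        refine norm_integral_le_of_norm_le ha (ae_of_all _ fun t ht => ?_)
          (Continuous.intervalIntegrable (by fun_prop) _ _)
        have ht2 : t ^ 2 ≤ 2 := by nlinarith [ht.1, ht.2]
        rw [Real.norm_eq_abs]
        refine (abs_exp_neg_sq_half_sub_sum_le ht2 hn).trans_eq ?_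
        rw [pow_mul, div_pow]
        ring
    _ = _ := by
        rw [intervalIntegral.integral_const_mul, integral_pow]
        push_cast
        simp

lemma mhatGap_1183_pos : 0 < mhatGap 1.183 := by
  have hJ := (abs_le.1 (abs_integral_exp_neg_sq_half_sub_sum_le (a := 1.183) (by norm_num)
    (by norm_num) (n := 6) (by norm_num))).2
  have hE := (abs_le.1 (abs_exp_neg_sq_half_sub_sum_le (t := 1.183) (by norm_num)
    (n := 7) (by norm_num))).2
  have hc := sqrt_two_pi_gt
  rw [mhatGap_eq, sub_pos, div_lt_one (by positivity)]
  norm_num [sum_range_succ, factorial] at hJ hE hc ⊢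
  linarith

lemma mhatGap_1193_neg : mhatGap 1.193 < 0 := by
  have hJ := (abs_le.1 (abs_integral_exp_neg_sq_half_sub_sum_le (a := 1.193) (by norm_num)
    (by norm_num) (n := 6) (by norm_num))).1
  have hE := (abs_le.1 (abs_exp_neg_sq_half_sub_sum_le (t := 1.193) (by norm_num)
    (n := 7) (by norm_num))).1
  have hc := sqrt_two_pi_lt
  rw [mhatGap_eq, sub_neg, one_lt_div (by positivity)]
  norm_num [sum_range_succ, factorial] at hJ hE hc ⊢
  linarith

lemma mul_phi_1183_lt : 1.183 * phi 1.183 < 0.2345 := by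
  have hE := (abs_le.1 (abs_exp_neg_sq_half_sub_sum_le (t := 1.183) (by norm_num)
    (n := 7) (by norm_num))).2
  have hc := sqrt_two_pi_gt
  rw [mul_phi_eq, div_lt_iff₀ (by positivity)]
  norm_num [sum_range_succ, factorial] at hE hc ⊢
  linarith

lemma lt_mul_phi_1193 : 0.2335 < 1.193 * phi 1.193 := by
  have hE := (abs_le.1 (abs_exp_neg_sq_half_sub_sum_le (t := 1.193) (by norm_num)
    (n := 7) (by norm_num))).1
  have hc := sqrt_two_pi_lt
  rw [mul_phi_eq, lt_div_iff₀ (by positivity)]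
  norm_num [sum_range_succ, factorial] at hE hc ⊢
  linarith

end Taylor

/-- The unique positive real number `m̂` with `2Φ(−m̂) = m̂·φ(m̂)`
lies in `(1.18, 1.20)`, and `0.2335 < 2Φ(−m̂) < 0.2345` (i.e. `2Φ(−m̂) = 0.234` to
three decimal places). -/
theorem numerical_bounds_mhat (m : ℝ) (hm : 0 < m)
    (hmeq : 2 * Phi (-m) = m * phi m) :
    1.18 < m ∧ m < 1.20 ∧ 0.2335 < 2 * Phi (-m) ∧ 2 * Phi (-m) < 0.2345 := by
  have hgap : mhatGap m = 0 := sub_eq_zero.2 hmeq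
  have hIcc {y : ℝ} (h0 : 0 ≤ y) (h2 : y ^ 2 ≤ 2) : y ∈ Icc 0 √3 :=
    ⟨h0, (le_sqrt h0 (by norm_num)).2 (by linarith)⟩
  have hm3 := hIcc hm.le (sq_le_two_of_mhatGap_eq_zero hm hgap)
  have hlo : 1.183 < m := (strictAntiOn_mhatGap.lt_iff_gt hm3 (hIcc (by norm_num) (by norm_num))).1
    (hgap ▸ mhatGap_1183_pos)
  have hhi : m < 1.193 := (strictAntiOn_mhatGap.lt_iff_gt (hIcc (by norm_num) (by norm_num)) hm3).1
    (hgap ▸ mhatGap_1193_neg)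
  have hm1 : m ∈ Ici 1 := mem_Ici.2 (by linarith)
  have hphi_lt := strictAntiOn_mul_phi (mem_Ici.2 (by norm_num)) hm1 hlo
  have hphi_gt := strictAntiOn_mul_phi hm1 (mem_Ici.2 (by norm_num)) hhi
  refine ⟨by linarith, by linarith, ?_, ?_⟩ <;> rw [hmeq]
  · exact lt_mul_phi_1193.trans hphi_gt
  · exact hphi_lt.trans mul_phi_1183_lt
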